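/- Let M=(I,V,E) be an iMAG and a∈V. Some edge of M carries an arrowhead at a if and only if a∉Anc_A(S_A) for every isADMG A=(I,V,S_A,E')∈[M]_G. Equivalently: if no edge of M has an arrowhead at a, then there exists an isADMG A∈[M]_G with a∈Anc_A(S_A). -/

import Mathlib

noncomputable section
open Classical

/-- Edge-endpoint marks: tail `−`, arrowhead `>`, or circle `∘`. -/
inductive Mark : Type
  | tail
  | arrow
  | circle
  deriving DecidableEq

/-- A mixed graph with input nodes over a node type `N`, as raw data.
`mark a b` is the mark at `a` on the (unique) edge between `a` and `b`,
or `none` if there is no edge between `a` and `b`. -/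
structure MixedGraph (N : Type) where
  inputs : Set N
  outputs : Set N
  mark : N → N → Option Mark

namespace MixedGraph

variable {N N' : Type}

/-- All nodes of the graph. -/
def nodes (G : MixedGraph N) : Set N := G.inputs ∪ G.outputs

/-- `a` and `b` are adjacent (joined by an edge). -/
def adj (G : MixedGraph N) (a b : N) : Prop := (G.mark a b).isSome

/-- Directed edge `a → b`: tail at `a`, arrowhead at `b`. -/
def dir (G : MixedGraph N) (a b : N) : Prop :=
  G.mark a b = some Mark.tail ∧ G.mark b a = some Mark.arrow

/-- Bidirected edge `a ↔ b`. -/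
def bidir (G : MixedGraph N) (a b : N) : Prop :=
  G.mark a b = some Mark.arrow ∧ G.mark b a = some Mark.arrow

/-- Undirected edge `a − b`. -/
def undir (G : MixedGraph N) (a b : N) : Prop :=
  G.mark a b = some Mark.tail ∧ G.mark b a = some Mark.tail

/-- Edge `a ∘→ b`: circle at `a`, arrowhead at `b`. -/
def circArrow (G : MixedGraph N) (a b : N) : Prop :=
  G.mark a b = some Mark.circle ∧ G.mark b a = some Mark.arrow

/-- Edge `a ∘−∘ b`: circles at both ends. -/
def circCirc (G : MixedGraph N) (a b : N) : Prop :=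
  G.mark a b = some Mark.circle ∧ G.mark b a = some Mark.circle

/-- Edge `a ∘− b`: circle at `a`, tail at `b`. -/
def circTail (G : MixedGraph N) (a b : N) : Prop :=
  G.mark a b = some Mark.circle ∧ G.mark b a = some Mark.tail

/-- Edge `a −∘ b`: tail at `a`, circle at `b`. -/
def tailCirc (G : MixedGraph N) (a b : N) : Prop :=
  G.mark a b = some Mark.tail ∧ G.mark b a = some Mark.circle

/-- Some edge of `G` carries an arrowhead at `a`. -/
def arrowAt (G : MixedGraph N) (a : N) : Prop :=
  ∃ b, G.mark a b = some Mark.arrow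

/-- `a` is an ancestor of `b`: `a = b` or a directed path `a → ⋯ → b` exists. -/
def anc (G : MixedGraph N) : N → N → Prop := Relation.ReflTransGen G.dir

/-- The ancestors of a set `S` of nodes. -/
def ancSet (G : MixedGraph N) (S : Set N) : Set N := {a | ∃ s ∈ S, G.anc a s}

/-- Potentially directed edge from `a` towards `b`: an edge with no arrowhead at its
earlier endpoint `a` and no tail at its later endpoint `b`. -/
def potDir (G : MixedGraph N) (a b : N) : Prop :=
  G.adj a b ∧ G.mark a b ≠ some Mark.arrow ∧ G.mark b a ≠ some Mark.tail

/-- `a` is a possible ancestor of `b`: `a = b` or a potentially directed path runs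
from `a` to `b`. -/
def poAn (G : MixedGraph N) : N → N → Prop := Relation.ReflTransGen G.potDir

/-- The possible ancestors of a set `S` of nodes. -/
def poAnSet (G : MixedGraph N) (S : Set N) : Set N := {a | ∃ s ∈ S, G.poAn a s}

/-- Well-formedness of a mixed graph with input nodes: inputs and outputs are disjoint
finite sets, edges are symmetric and irreflexive and join nodes of the graph. -/
def WF (G : MixedGraph N) : Prop :=
  Disjoint G.inputs G.outputs ∧ G.inputs.Finite ∧ G.outputs.Finite ∧
  (∀ a b, (G.mark a b).isSome → (G.mark b a).isSome) ∧
  (∀ a, G.mark a a = none) ∧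
  (∀ a b, (G.mark a b).isSome → a ∈ G.nodes ∧ b ∈ G.nodes)

/-- The induced subgraph of `G` over the node set `A`. -/
def induce (G : MixedGraph N) (A : Set N) : MixedGraph N where
  inputs := G.inputs ∩ A
  outputs := G.outputs ∩ A
  mark := fun a b => if a ∈ A ∧ b ∈ A then G.mark a b else none

/-- Transport a mixed graph over `N` to one over `N ⊕ N'` along `Sum.inl`. -/
def sumInl (G : MixedGraph N) : MixedGraph (N ⊕ N') where
  inputs := Sum.inl '' G.inputs
  outputs := Sum.inl '' G.outputs
  mark := fun x y =>
    match x, y with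
    | Sum.inl a, Sum.inl b => G.mark a b
    | _, _ => none

/-- `G` is a subgraph of `H`: its nodes and marked edges are among those of `H`. -/
def Subgraph (G H : MixedGraph N) : Prop :=
  G.inputs ⊆ H.inputs ∧ G.outputs ⊆ H.outputs ∧
  ∀ a b m, G.mark a b = some m → H.mark a b = some m

end MixedGraph

/-- A walk in `G` with `len` edges, visiting the nodes `f 0, …, f len`
(consecutive nodes are adjacent). -/
structure GWalk {N : Type} (G : MixedGraph N) where
  len : ℕ
  f : ℕ → N
  hadj : ∀ i < len, G.adj (f i) (f (i + 1))

namespace GWalk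

variable {N : Type} {G : MixedGraph N}

/-- The first node of the walk. -/
def first (w : GWalk G) : N := w.f 0

/-- The last node of the walk. -/
def last (w : GWalk G) : N := w.f w.len

/-- The walk is a path: no repeated nodes. -/
def IsPath (w : GWalk G) : Prop :=
  ∀ i ≤ w.len, ∀ j ≤ w.len, w.f i = w.f j → i = j

/-- The (interior) node at position `i` is a collider on the walk: both incident
edges carry arrowheads at it. -/
def ColliderAt (w : GWalk G) (i : ℕ) : Prop :=
  G.mark (w.f i) (w.f (i - 1)) = some Mark.arrow ∧
  G.mark (w.f i) (w.f (i + 1)) = some Mark.arrow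

end GWalk

namespace MixedGraph

variable {N : Type}

/-- `w` is an `(L,S)`-inducing walk: every non-endnode is in `L` or a collider, and
every collider lies in `Anc({first, last} ∪ S)`. -/
def InducingWalk (G : MixedGraph N) (L S : Set N) (w : GWalk G) : Prop :=
  (∀ i, 0 < i → i < w.len → w.f i ∈ L ∨ w.ColliderAt i) ∧
  (∀ i, 0 < i → i < w.len → w.ColliderAt i →
    w.f i ∈ G.ancSet ({w.first, w.last} ∪ S))

/-- There is an `(L,S)`-inducing walk from `a` to `b` in `G`. -/
def InducingWalkBtw (G : MixedGraph N) (L S : Set N) (a b : N) : Prop :=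
  ∃ w : GWalk G, w.first = a ∧ w.last = b ∧ G.InducingWalk L S w

/-- There is an `(L,S)`-inducing path from `a` to `b` in `G`. -/
def InducingPathBtw (G : MixedGraph N) (L S : Set N) (a b : N) : Prop :=
  ∃ w : GWalk G, w.IsPath ∧ w.first = a ∧ w.last = b ∧ G.InducingWalk L S w

/-- `G` is an iADMG: all edges directed or bidirected, no directed cycles, no
arrowheads at input nodes, and no edges between two input nodes. -/
def IsIADMG (G : MixedGraph N) : Prop :=
  G.WF ∧
  (∀ a b, G.adj a b → G.dir a b ∨ G.dir b a ∨ G.bidir a b) ∧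
  (∀ a b, G.dir a b → ¬ G.anc b a) ∧
  (∀ a ∈ G.inputs, ∀ b, G.mark a b ≠ some Mark.arrow) ∧
  (∀ a ∈ G.inputs, ∀ b ∈ G.inputs, ¬ G.adj a b)

/-- `G` is an iPAG. -/
def IsIPAG (G : MixedGraph N) : Prop :=
  G.WF ∧
  (∀ a ∈ G.inputs, ∀ b, G.mark a b ≠ some Mark.arrow) ∧
  (∀ a ∈ G.inputs, ∀ b ∈ G.inputs, ¬ G.adj a b) ∧
  (∀ a b, G.dir a b → ¬ G.anc b a) ∧
  (∀ a b, G.anc a b → ¬ G.bidir b a) ∧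
  (∀ a b c, G.mark b a = some Mark.arrow → ¬ G.undir b c) ∧
  (∀ a b, a ≠ b → a ∈ G.nodes → b ∈ G.nodes → ¬ G.adj a b →
    ¬ G.InducingPathBtw ∅ ∅ a b)

/-- `G` is an iMAG: an iPAG with no circle marks. -/
def IsIMAG (G : MixedGraph N) : Prop :=
  G.IsIPAG ∧ ∀ a b, G.mark a b ≠ some Mark.circle

/-- The visibility condition for a directed edge `a → b` of `G`: either `a` is an
input node, or some node `c` not adjacent to `b` satisfies `c *→ a`, or there is a
path `c *→ v₁ ↔ ⋯ ↔ v_{n−1} ↔ a` (`n ≥ 2`) with every `vᵢ` a parent of `b`. -/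
def VisibleCond (G : MixedGraph N) (a b : N) : Prop :=
  a ∈ G.inputs ∨
  ∃ c, c ≠ b ∧ ¬ G.adj c b ∧
    (G.mark a c = some Mark.arrow ∨
      ∃ w : GWalk G, w.IsPath ∧ 2 ≤ w.len ∧ w.first = c ∧ w.last = a ∧
        G.mark (w.f 1) (w.f 0) = some Mark.arrow ∧
        (∀ i, 1 ≤ i → i < w.len → G.bidir (w.f i) (w.f (i + 1))) ∧
        (∀ i, 1 ≤ i → i < w.len → G.dir (w.f i) b))

/-- `a → b` is a visible directed edge of `G`. -/
def VisibleDir (G : MixedGraph N) (a b : N) : Prop :=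
  G.dir a b ∧ G.VisibleCond a b

/-- `a` and `b` are in the same bucket of `G`: some path between them carries no
arrowhead mark on any of its edges. -/
def SameBucket (G : MixedGraph N) (a b : N) : Prop :=
  ∃ w : GWalk G, w.IsPath ∧ w.first = a ∧ w.last = b ∧
    ∀ i < w.len, G.mark (w.f i) (w.f (i + 1)) ≠ some Mark.arrow ∧
      G.mark (w.f (i + 1)) (w.f i) ≠ some Mark.arrow

end MixedGraph

/-- An isADMG: an iADMG together with its set `sel` of latent selection nodes.
The observed output nodes are `graph.outputs \ sel`. -/
structure SADMG (N : Type) where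
  graph : MixedGraph N
  sel : Set N

namespace SADMG

/-- Well-formedness of an isADMG. -/
def WF {N : Type} (A : SADMG N) : Prop :=
  A.graph.IsIADMG ∧ A.sel ⊆ A.graph.outputs

/-- The observed output nodes `O`. -/
def obs {N : Type} (A : SADMG N) : Set N := A.graph.outputs \ A.sel

end SADMG

/-- An ilsADMG: an iADMG together with its sets of latent output nodes and of
latent selection nodes.  The observed output nodes are the remaining outputs. -/
structure LSADMG (N : Type) where
  graph : MixedGraph N
  latent : Set N
  sel : Set N

namespace LSADMG

/-- Well-formedness of an ilsADMG. -/
def WF {N : Type} (A : LSADMG N) : Prop :=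
  A.graph.IsIADMG ∧ A.latent ⊆ A.graph.outputs ∧ A.sel ⊆ A.graph.outputs ∧
  Disjoint A.latent A.sel

/-- The observed output nodes `O`. -/
def obs {N : Type} (A : LSADMG N) : Set N := A.graph.outputs \ (A.latent ∪ A.sel)

end LSADMG

/-- An iPAG/iMAG `P` represents the isADMG `A`: nodes match; adjacency in `P`
corresponds exactly to `S`-inducing paths in `A` (with no edges inside the inputs);
arrowheads at `a` imply `a ∉ Anc_A({b} ∪ S)`; tails at `a` imply `a ∈ Anc_A({b} ∪ S)`. -/
def RepresentsS {N : Type} (P : MixedGraph N) (A : SADMG N) : Prop :=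
  P.inputs = A.graph.inputs ∧
  P.outputs = A.obs ∧
  (∀ a b, a ≠ b → a ∈ P.nodes → b ∈ P.nodes →
    (P.adj a b ↔
      (¬(a ∈ P.inputs ∧ b ∈ P.inputs) ∧ A.graph.InducingPathBtw ∅ A.sel a b))) ∧
  (∀ a b, P.mark a b = some Mark.arrow → a ∉ A.graph.ancSet ({b} ∪ A.sel)) ∧
  (∀ a b, P.mark a b = some Mark.tail → a ∈ A.graph.ancSet ({b} ∪ A.sel))

/-- An iPAG/iMAG `P` `(L,S)`-represents the ilsADMG `A`. -/
def RepresentsLS {N : Type} (P : MixedGraph N) (A : LSADMG N) : Prop :=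
  P.inputs = A.graph.inputs ∧
  P.outputs = A.obs ∧
  (∀ a b, a ≠ b → a ∈ P.nodes → b ∈ P.nodes →
    (P.adj a b ↔
      (¬(a ∈ P.inputs ∧ b ∈ P.inputs) ∧ A.graph.InducingPathBtw A.latent A.sel a b))) ∧
  (∀ a b, P.mark a b = some Mark.arrow → a ∉ A.graph.ancSet ({b} ∪ A.sel)) ∧
  (∀ a b, P.mark a b = some Mark.tail → a ∈ A.graph.ancSet ({b} ∪ A.sel))

/-- The explicit candidate for `MAG(A)` of an ilsADMG `A`: input nodes `I`, output
nodes `O`; distinct `a,b ∈ I ∪ O` adjacent iff `{a,b} ⊄ I` and there is an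
`(L,S)`-inducing path between them in `A`; the mark at `a` on each edge is a tail
if `a ∈ Anc_A({b} ∪ S)` and an arrowhead otherwise. -/
def magOfLS {N : Type} (A : LSADMG N) : MixedGraph N where
  inputs := A.graph.inputs
  outputs := A.obs
  mark := fun a b =>
    if a ≠ b ∧ a ∈ A.graph.inputs ∪ A.obs ∧ b ∈ A.graph.inputs ∪ A.obs ∧
        ¬(a ∈ A.graph.inputs ∧ b ∈ A.graph.inputs) ∧
        A.graph.InducingPathBtw A.latent A.sel a b then
      (if a ∈ A.graph.ancSet ({b} ∪ A.sel) then some Mark.tail else some Mark.arrow)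
    else none

/-- A walk is `C`-open (in a graph without circle marks): its endnodes are not in
`C`, no non-collider on it is in `C`, and every collider on it is in `Anc(C)`. -/
def COpen {N : Type} (H : MixedGraph N) (C : Set N) (w : GWalk H) : Prop :=
  w.first ∉ C ∧ w.last ∉ C ∧
  ∀ i, 0 < i → i < w.len →
    (¬ w.ColliderAt i → w.f i ∉ C) ∧ (w.ColliderAt i → w.f i ∈ H.ancSet C)

/-- `A` is id-separated from `B` given `C` in `H` (graphs without circle marks):
every path/walk from a node of `A` to a node of `B ∪ inputs` is not `C`-open. -/
def IdSepSimple {N : Type} (H : MixedGraph N) (A B C : Set N) : Prop :=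
  ∀ w : GWalk H, w.first ∈ A → w.last ∈ B ∪ H.inputs → ¬ COpen H C w

/-- A walk in a manipulated graph `H` (with set `DI` of regime input nodes) is
`C`-id-open. -/
def IdOpen {N : Type} (H : MixedGraph N) (DI C : Set N) (w : GWalk H) : Prop :=
  w.first ∉ C ∧ w.last ∉ C ∧
  ∀ i, 0 < i → i < w.len →
    (w.f i ∉ C ∧ (H.mark (w.f i) (w.f (i - 1)) = some Mark.tail ∨
        H.mark (w.f i) (w.f (i + 1)) = some Mark.tail)) ∨
    (w.f i ∉ C ∧ H.mark (w.f i) (w.f (i - 1)) = some Mark.circle ∧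
        H.mark (w.f i) (w.f (i + 1)) = some Mark.circle ∧
        ¬ H.adj (w.f (i - 1)) (w.f (i + 1))) ∨
    (w.ColliderAt i ∧ w.f (i - 1) ∉ DI ∧ w.f i ∉ DI ∧ w.f (i + 1) ∉ DI ∧
        w.f i ∈ H.ancSet C) ∨
    (w.ColliderAt i ∧ ¬(w.f (i - 1) ∉ DI ∧ w.f i ∉ DI ∧ w.f (i + 1) ∉ DI) ∧
        w.f i ∈ H.poAnSet (C ∩ H.outputs)) ∨
    (w.f (i - 1) ∈ DI ∧ H.mark (w.f i) (w.f (i - 1)) = some Mark.circle ∧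
        H.mark (w.f i) (w.f (i + 1)) = some Mark.arrow ∧
        w.f i ∈ H.poAnSet (C ∩ H.outputs)) ∨
    (w.f (i + 1) ∈ DI ∧ H.mark (w.f i) (w.f (i - 1)) = some Mark.arrow ∧
        H.mark (w.f i) (w.f (i + 1)) = some Mark.circle ∧
        w.f i ∈ H.poAnSet (C ∩ H.outputs))

/-- `A` is id-separated from `B` given `C` in the manipulated graph `H`, whose set
of regime input nodes is `DI`: every path/walk from a node of `A` to a node of
`B ∪ inputs` is not `C`-id-open. -/
def IdSep {N : Type} (H : MixedGraph N) (DI A B C : Set N) : Prop :=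
  ∀ w : GWalk H, w.first ∈ A → w.last ∈ B ∪ H.inputs → ¬ IdOpen H DI C w

/-- Hard manipulation `do(T)` of an isADMG-type graph: reclassify the nodes of `T`
as input nodes and delete every edge with an arrowhead at a node of `T`. -/
def admgHardManip {N : Type} (G : MixedGraph N) (T : Set N) : MixedGraph N where
  inputs := G.inputs ∪ (T ∩ G.outputs)
  outputs := G.outputs \ T
  mark := fun x y =>
    if (x ∈ T ∧ G.mark x y = some Mark.arrow) ∨
        (y ∈ T ∧ G.mark y x = some Mark.arrow) then none
    else G.mark x y

/-- Soft manipulation `do(I_D)` of an isADMG-type graph: add a fresh input node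
`I_d = Sum.inr d` and the directed edge `I_d → d` for each `d ∈ D`. -/
def admgSoftManip {N : Type} (G : MixedGraph N) (D : Set N) : MixedGraph (N ⊕ N) where
  inputs := Sum.inl '' G.inputs ∪ Sum.inr '' D
  outputs := Sum.inl '' G.outputs
  mark := fun x y =>
    match x, y with
    | Sum.inl a, Sum.inl b => G.mark a b
    | Sum.inr d, Sum.inl a => if d ∈ D ∧ a = d then some Mark.tail else none
    | Sum.inl a, Sum.inr d => if d ∈ D ∧ a = d then some Mark.arrow else none
    | Sum.inr _, Sum.inr _ => none

/-- Soft manipulation of an isADMG. -/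
def SADMG.softManip {N : Type} (A : SADMG N) (D : Set N) : SADMG (N ⊕ N) where
  graph := admgSoftManip A.graph D
  sel := Sum.inl '' A.sel

/-- Hard manipulation `do(T)` of an iMAG-type graph: input nodes `I ∪ (T ∩ V)`,
output nodes `V \ T`; delete all edges with an arrowhead at a node of `T \ I` and
all edges between two nodes of `T ∪ I`. -/
def magHardManip {N : Type} (G : MixedGraph N) (T : Set N) : MixedGraph N where
  inputs := G.inputs ∪ (T ∩ G.outputs)
  outputs := G.outputs \ T
  mark := fun x y =>
    if (x ∈ T ∧ x ∉ G.inputs ∧ G.mark x y = some Mark.arrow) ∨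
        (y ∈ T ∧ y ∉ G.inputs ∧ G.mark y x = some Mark.arrow) ∨
        ((x ∈ T ∨ x ∈ G.inputs) ∧ (y ∈ T ∨ y ∈ G.inputs)) then none
    else G.mark x y

/-- The mark at node `y` on the new edge between the regime node `I_a = Sum.inr a`
and `y` in the soft manipulation of an iMAG-type graph `G` over `N ⊕ N`
(`none` if there is no such edge): `I_a → a` if some edge of `G` has an arrowhead
at `a`; `I_a − a` if some undirected edge is at `a`; `I_a −∘ a` otherwise;
`I_a → b` for every output `b` with `a → b` invisible; `I_a − b` for every output
`b` with `a − b` in `G`. -/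
def magSoftTarget {N : Type} (G : MixedGraph (N ⊕ N)) (a : N) (y : N ⊕ N) : Option Mark :=
  if y = Sum.inl a then
    (if G.arrowAt (Sum.inl a) then some Mark.arrow
     else if ∃ c, G.undir (Sum.inl a) c then some Mark.tail
     else some Mark.circle)
  else if y ∈ G.outputs ∧ G.dir (Sum.inl a) y ∧ ¬ G.VisibleCond (Sum.inl a) y then
    some Mark.arrow
  else if y ∈ G.outputs ∧ G.undir (Sum.inl a) y then some Mark.tail
  else none

/-- The mark at node `y` on the new edge between the regime node `I_a = Sum.inr a`
and `y` in the soft manipulation of an iPAG-type graph `G` over `N ⊕ N`. -/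
def pagSoftTarget {N : Type} (G : MixedGraph (N ⊕ N)) (a : N) (y : N ⊕ N) : Option Mark :=
  if y = Sum.inl a then
    (if G.arrowAt (Sum.inl a) then some Mark.arrow
     else if ∃ c, G.undir (Sum.inl a) c then some Mark.tail
     else some Mark.circle)
  else if y ∈ G.outputs ∧ ((G.dir (Sum.inl a) y ∧ ¬ G.VisibleCond (Sum.inl a) y) ∨
      G.circArrow (Sum.inl a) y) then some Mark.arrow
  else if y ∈ G.outputs ∧ (G.undir (Sum.inl a) y ∨
      (G.circTail (Sum.inl a) y ∧ ∃ c, G.undir c y)) then some Mark.tail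
  else if y ∈ G.outputs ∧ (G.tailCirc (Sum.inl a) y ∨ G.circCirc (Sum.inl a) y ∨
      (G.circTail (Sum.inl a) y ∧ ¬ ∃ c, G.undir c y)) then some Mark.circle
  else none

/-- Generic soft-manipulation step on a graph over `N ⊕ N`: for each `a ∈ A` not
already an input, the regime node `I_a = Sum.inr a` is added as an input node,
with edges (and end marks) prescribed by `target`; the mark at `I_a` on each new
edge is a tail. -/
def softManipStep {N : Type}
    (target : MixedGraph (N ⊕ N) → N → (N ⊕ N) → Option Mark)
    (G : MixedGraph (N ⊕ N)) (A : Set N) : MixedGraph (N ⊕ N) where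
  inputs := G.inputs ∪ Sum.inr '' {a | a ∈ A ∧ Sum.inl a ∉ G.inputs}
  outputs := G.outputs
  mark := fun x y =>
    match x, y with
    | Sum.inr a, Sum.inr b =>
        if a ∈ A ∧ Sum.inl a ∉ G.inputs then
          (if (target G a (Sum.inr b)).isSome then some Mark.tail else none)
        else if b ∈ A ∧ Sum.inl b ∉ G.inputs then target G b (Sum.inr a)
        else G.mark x y
    | Sum.inr a, Sum.inl v =>
        if a ∈ A ∧ Sum.inl a ∉ G.inputs then
          (if (target G a (Sum.inl v)).isSome then some Mark.tail else none)
        else G.mark x y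
    | Sum.inl v, Sum.inr a =>
        if a ∈ A ∧ Sum.inl a ∉ G.inputs then target G a (Sum.inl v)
        else G.mark x y
    | Sum.inl _, Sum.inl _ => G.mark x y

/-- Soft-manipulation step for iMAG-type graphs over `N ⊕ N`. -/
def magSoftManipStep {N : Type} (G : MixedGraph (N ⊕ N)) (A : Set N) :
    MixedGraph (N ⊕ N) :=
  softManipStep magSoftTarget G A

/-- The soft-manipulated iMAG `M_{do(I_A)}`, over node type `N ⊕ N`. -/
def magSoftManip {N : Type} (M : MixedGraph N) (A : Set N) : MixedGraph (N ⊕ N) :=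
  magSoftManipStep M.sumInl A

/-- The soft-manipulated iPAG `P_{do(I_A)}`, over node type `N ⊕ N`. -/
def pagSoftManip {N : Type} (P : MixedGraph N) (A : Set N) : MixedGraph (N ⊕ N) :=
  softManipStep pagSoftTarget P.sumInl A

/-- Hard manipulation `do(T)` of an iPAG-type graph: as for iMAGs, but in addition
every remaining circle mark at a manipulated node is replaced by a tail. -/
def pagHardManip {N : Type} (G : MixedGraph N) (T : Set N) : MixedGraph N where
  inputs := G.inputs ∪ T
  outputs := G.outputs \ T
  mark := fun x y =>
    if (x ∈ T ∧ x ∉ G.inputs ∧ G.mark x y = some Mark.arrow) ∨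
        (y ∈ T ∧ y ∉ G.inputs ∧ G.mark y x = some Mark.arrow) ∨
        ((x ∈ T ∨ x ∈ G.inputs) ∧ (y ∈ T ∨ y ∈ G.inputs)) then none
    else if x ∈ T ∧ x ∉ G.inputs ∧ y ∈ G.outputs ∧ y ∉ T ∧
        G.mark x y = some Mark.circle then some Mark.tail
    else G.mark x y

/-- Orient all circle marks of `G` as tails. -/
def orientCirclesTails {N : Type} (G : MixedGraph N) : MixedGraph N :=
  { G with
    mark := fun x y =>
      (G.mark x y).map (fun m => if m = Mark.circle then Mark.tail else m) }

/-- There is a pc-connecting path from `a` to `b` in `G`: a single edge between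
`a` and `b` that is not a visible directed edge, or a path
`a *→ v₁ ↔ ⋯ ↔ v_{n−1} ←* b` (`n > 1`) none of whose edges is visible directed. -/
def PcConn {N : Type} (G : MixedGraph N) (a b : N) : Prop :=
  (G.adj a b ∧ ¬ G.VisibleDir a b ∧ ¬ G.VisibleDir b a) ∨
  (∃ w : GWalk G, w.IsPath ∧ 1 < w.len ∧ w.first = a ∧ w.last = b ∧
    G.mark (w.f 1) (w.f 0) = some Mark.arrow ∧
    G.mark (w.f (w.len - 1)) (w.f w.len) = some Mark.arrow ∧
    (∀ i, 1 ≤ i → i < w.len - 1 → G.bidir (w.f i) (w.f (i + 1))) ∧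
    (∀ i < w.len, ¬ G.VisibleDir (w.f i) (w.f (i + 1)) ∧
      ¬ G.VisibleDir (w.f (i + 1)) (w.f i)))

/-- The pc-component of `b` in `G`. -/
def pcSet {N : Type} (G : MixedGraph N) (b : N) : Set N := {a | PcConn G a b}

/-- The region of a set `B` in `G`: all nodes in the bucket of some node
pc-connected to a node of `B`. -/
def regionSet {N : Type} (G : MixedGraph N) (B : Set N) : Set N :=
  {a | ∃ b ∈ B, ∃ c, PcConn G c b ∧ G.SameBucket a c}

/-- `S` is a bucket of `G`. -/
def IsBucket {N : Type} (G : MixedGraph N) (S : Set N) : Prop :=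
  ∃ a ∈ G.nodes, S = {x | G.SameBucket x a}

/-- FCI rule R1 (closure form): if `k *→ j` with the edge between `j` and `i`
carrying a circle at `j`, `i` and `k` non-adjacent and `i` not an input node,
then that edge is `j → i`. -/
def FciR1 {N : Type} (P : MixedGraph N) : Prop :=
  ∀ i j k, P.mark j k = some Mark.arrow → ¬ P.adj i k → i ∉ P.inputs →
    P.mark j i = some Mark.circle → P.dir j i

/-- FCI rule R2 (closure form): if `i → j *→ k` or `i *→ j → k` with the edge
between `i` and `k` carrying a circle at `k`, then that edge has an arrowhead at `k`. -/
def FciR2 {N : Type} (P : MixedGraph N) : Prop :=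
  ∀ i j k, ((P.dir i j ∧ P.mark k j = some Mark.arrow) ∨
      (P.mark j i = some Mark.arrow ∧ P.dir j k)) →
    P.mark k i = some Mark.circle → P.mark k i = some Mark.arrow

/-- FCI rule R4 (closure form): for every discriminating path `⟨a,…,y,z⟩` for `y`,
the mark at `y` on the edge between `y` and `z` is not a circle. -/
def FciR4 {N : Type} (P : MixedGraph N) : Prop :=
  ∀ w : GWalk P, w.IsPath → 3 ≤ w.len → ¬ P.adj (w.f 0) (w.f w.len) →
    (∀ i, 0 < i → i < w.len - 1 → w.ColliderAt i ∧ P.dir (w.f i) (w.f w.len)) →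
    P.mark (w.f (w.len - 1)) (w.f w.len) ≠ some Mark.circle

/-- Property (P2) of iSOPAGs: no `a *→ b` together with `b −∘ c`, and no
`a *→ b` together with `b ∘− c`. -/
def SopagP2 {N : Type} (P : MixedGraph N) : Prop :=
  ∀ a b c, P.mark b a = some Mark.arrow → ¬ P.tailCirc b c ∧ ¬ P.circTail b c

/-- Property (P3) of iSOPAGs: if `a *→ b` and the edge between `b` and `c` has a
circle at `b`, then `a *→ c`. -/
def SopagP3 {N : Type} (P : MixedGraph N) : Prop :=
  ∀ a b c, P.mark b a = some Mark.arrow → P.mark b c = some Mark.circle →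
    P.mark c a = some Mark.arrow

/-- `P` is an iSOPAG: an iPAG representing some isADMG, closed under the FCI
orientation rules (R1, R2, R4), and satisfying (P2) and (P3). -/
def IsISOPAG {N : Type} (P : MixedGraph N) : Prop :=
  P.IsIPAG ∧ (∃ A : SADMG N, A.WF ∧ RepresentsS P A) ∧
  FciR1 P ∧ FciR2 P ∧ FciR4 P ∧ SopagP2 P ∧ SopagP3 P

/-!
If no edge of `M` has an arrowhead at `a`, build an isADMG from `M` by replacing every
undirected edge `u − v` with a selection node `u → s ← v` and adding one more selection node
`a → sₐ`. A parent of a selection node carries no arrowhead in `M` (an iMAG has no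
`*→ u − v`), so it is its own only ancestor there: the selection nodes make no node with an
arrowhead an ancestor of `S`. Their neighbours all carry tails towards them, so on an inducing
path a selection node can only be the middle node of `u → s ← v`. Hence `M` still represents
the new graph, while `a ∈ Anc(S)`. Conversely, an arrowhead at `a` on the edge with `b`
already forces `a ∉ Anc({b} ∪ S)`.
-/

theorem exists_embedding_forall_notMem {α β : Type*} [Countable α] [Infinite β]
    {s : Set β} (hs : s.Finite) : ∃ f : α ↪ β, ∀ x, f x ∉ s := by
  have := hs.infinite_compl.to_subtype
  exact ⟨(nonempty_embedding_nat α).some.trans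
    ((Infinite.natEmbedding ↥sᶜ).trans (Function.Embedding.subtype _)),
    fun x => (Infinite.natEmbedding ↥sᶜ _).2⟩

namespace MixedGraph

variable {N : Type}

theorem anc_eq_of_forall_mark_ne_arrow {G : MixedGraph N} {x u : N}
    (hu : ∀ y, G.mark u y ≠ some Mark.arrow) (h : G.anc x u) : x = u := by
  rcases Relation.ReflTransGen.cases_tail h with h | ⟨c, _, hcu⟩
  · exact h.symm
  · exact absurd hcu.2 (hu c)

theorem dir.adj {G : MixedGraph N} {x y : N} (h : G.dir x y) : G.adj x y :=
  Option.isSome_of_mem h.1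

theorem undir_comm {G : MixedGraph N} {x y : N} : G.undir x y ↔ G.undir y x :=
  and_comm

theorem IsIPAG.mark_ne_arrow_of_undir {G : MixedGraph N} (hG : G.IsIPAG) {u v : N}
    (huv : G.undir u v) (y : N) : G.mark u y ≠ some Mark.arrow :=
  fun h => hG.2.2.2.2.2.1 y u v h huv

theorem IsIMAG.mark_eq_tail_or_arrow {G : MixedGraph N} (hG : G.IsIMAG) {x y : N}
    (h : G.adj x y) : G.mark x y = some Mark.tail ∨ G.mark x y = some Mark.arrow := by
  obtain ⟨m, hm⟩ := Option.isSome_iff_exists.mp h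
  cases m with
  | tail => exact Or.inl hm
  | arrow => exact Or.inr hm
  | circle => exact absurd hm (hG.2 x y)

theorem InducingWalk.colliderAt {G : MixedGraph N} {S : Set N} {w : GWalk G}
    (hw : G.InducingWalk ∅ S w) {i : ℕ} (h0 : 0 < i) (hi : i < w.len) : w.ColliderAt i :=
  (hw.1 i h0 hi).resolve_left (Set.notMem_empty _)

theorem inducingPathBtw_of_adj {G : MixedGraph N} {L S : Set N} {x y : N} (h : G.adj x y)
    (hxy : x ≠ y) : G.InducingPathBtw L S x y := by
  let w : GWalk G :=
    ⟨1, fun i => if i = 0 then x else y, fun i hi => by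
      obtain rfl : i = 0 := by omega
      simpa⟩
  refine ⟨w, fun i hi j hj hij => ?_, rfl, rfl, fun i h0 hi => ?_, fun i h0 hi => ?_⟩
  · simp only [w] at hi hj hij
    interval_cases i <;> interval_cases j <;> simp_all
  all_goals exact absurd hi (by simp only [w]; omega)

theorem inducingPathBtw_of_collider {G : MixedGraph N} {L S : Set N} {x s y : N}
    (hxs : G.adj x s) (hsx : G.mark s x = some .arrow) (hsy : G.mark s y = some .arrow)
    (hs : s ∈ G.ancSet ({x, y} ∪ S)) (hxs' : x ≠ s) (hsy' : s ≠ y) (hxy : x ≠ y) :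
    G.InducingPathBtw L S x y := by
  let w : GWalk G := ⟨2, fun i => if i = 0 then x else if i = 1 then s else y, fun i hi => by
    interval_cases i
    · simpa
    · exact Option.isSome_of_mem hsy⟩
  refine ⟨w, fun i hi j hj hij => ?_, rfl, rfl, fun i h0 hi => ?_, fun i h0 hi _ => ?_⟩
  · simp only [w] at hi hj hij
    interval_cases i <;> interval_cases j <;> simp_all
  all_goals obtain rfl : i = 1 := by simp only [w] at hi; omega
  · exact Or.inr ⟨by simpa [w] using hsx, by simpa [w] using hsy⟩
  · simpa [w, GWalk.first, GWalk.last] using hs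

/-- Replace the undirected edges of `M` by selection nodes: a node `x` with
`sel x = some (u, v)` becomes a selection node with `u → x ← v`. -/
def selGraph (M : MixedGraph N) (sel : N → Option (N × N)) : MixedGraph N where
  inputs := M.inputs
  outputs := M.outputs ∪ {x | (sel x).isSome}
  mark x y :=
    match sel x, sel y with
    | some (u, v), _ => if y = u ∨ y = v then some .arrow else none
    | none, some (u, v) => if x = u ∨ x = v then some .tail else none
    | none, none => if M.undir x y then none else M.mark x y

variable {M : MixedGraph N} {sel : N → Option (N × N)} {x y u v : N}

theorem selGraph_mark_of_sel_eq_some (hx : sel x = some (u, v)) (y : N) :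
    (selGraph M sel).mark x y = if y = u ∨ y = v then some .arrow else none := by
  simp only [selGraph, hx]

theorem selGraph_mark_of_sel_eq_none_of_sel_eq_some (hx : sel x = none)
    (hy : sel y = some (u, v)) :
    (selGraph M sel).mark x y = if x = u ∨ x = v then some .tail else none := by
  simp only [selGraph, hx, hy]

theorem selGraph_mark_of_sel_eq_none (hx : sel x = none) (hy : sel y = none) :
    (selGraph M sel).mark x y = if M.undir x y then none else M.mark x y := by
  simp only [selGraph, hx, hy]

theorem selGraph_mark_ne_tail_of_sel_eq_some (hx : sel x = some (u, v)) (y : N) :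
    (selGraph M sel).mark x y ≠ some .tail := by
  rw [selGraph_mark_of_sel_eq_some hx]
  split_ifs <;> simp

theorem selGraph_mark_eq_some_iff (hx : sel x = none) (hy : sel y = none) {m : Mark} :
    (selGraph M sel).mark x y = some m ↔ M.mark x y = some m ∧ ¬ M.undir x y := by
  rw [selGraph_mark_of_sel_eq_none hx hy]
  split_ifs with h <;> simp [h]

theorem selGraph_mark_eq_arrow_iff (hx : sel x = none) (hy : sel y = none) :
    (selGraph M sel).mark x y = some .arrow ↔ M.mark x y = some .arrow := by
  rw [selGraph_mark_eq_some_iff hx hy]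
  exact ⟨And.left, fun h => ⟨h, fun hu => by simp [hu.1] at h⟩⟩

theorem selGraph_dir_iff (hx : sel x = none) (hy : sel y = none) :
    (selGraph M sel).dir x y ↔ M.dir x y := by
  unfold dir
  rw [selGraph_mark_eq_some_iff hx hy, selGraph_mark_eq_arrow_iff hy hx]
  exact ⟨fun h => ⟨h.1.1, h.2⟩, fun h => ⟨⟨h.1, fun hu => by simp [hu.2] at h⟩, h.2⟩⟩

theorem selGraph_adj_iff_of_sel_eq_none (hx : sel x = none) (hy : sel y = none) :
    (selGraph M sel).adj x y ↔ M.adj x y ∧ ¬ M.undir x y := by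
  unfold adj
  rw [selGraph_mark_of_sel_eq_none hx hy]
  split_ifs with h <;> simp [h]

theorem sel_eq_none_of_selGraph_dir (h : (selGraph M sel).dir x y) : sel x = none := by
  rcases hx : sel x with _ | ⟨u, v⟩
  · rfl
  · exact absurd h.1 (selGraph_mark_ne_tail_of_sel_eq_some hx y)

theorem selGraph_bidir_iff (hx : sel x = none) (hy : sel y = none) :
    (selGraph M sel).bidir x y ↔ M.bidir x y := by
  unfold bidir
  rw [selGraph_mark_eq_arrow_iff hx hy, selGraph_mark_eq_arrow_iff hy hx]

theorem eq_of_selGraph_anc_of_sel_eq_some {p : N × N} (hx : sel x = some p)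
    (h : (selGraph M sel).anc x y) : x = y := by
  rcases Relation.ReflTransGen.cases_head h with h | ⟨c, hxc, -⟩
  · exact h
  · simp [sel_eq_none_of_selGraph_dir hxc] at hx

theorem anc_of_selGraph_anc (h : (selGraph M sel).anc x y) (hy : sel y = none) :
    M.anc x y := by
  induction h with
  | refl => exact .refl
  | tail _ hbc ih =>
    have hb := sel_eq_none_of_selGraph_dir hbc
    exact (ih hb).tail ((selGraph_dir_iff hb hy).mp hbc)

theorem selGraph_nodes_subset : M.nodes ⊆ (selGraph M sel).nodes :=
  Set.union_subset_union_right _ Set.subset_union_left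

def selADMG (M : MixedGraph N) (sel : N → Option (N × N)) : SADMG N :=
  ⟨selGraph M sel, {x | (sel x).isSome}⟩

def SelParent (sel : N → Option (N × N)) (c s : N) : Prop :=
  ∃ u v, sel s = some (u, v) ∧ (c = u ∨ c = v)

theorem SelParent.sel_isSome {c s : N} (h : SelParent sel c s) : (sel s).isSome := by
  obtain ⟨u, v, hs, -⟩ := h
  simp [hs]

structure SelLabelling (M : MixedGraph N) (sel : N → Option (N × N)) : Prop where
  finite : {x | (sel x).isSome}.Finite
  fresh : ∀ x p, sel x = some p → x ∉ M.nodes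
  parent_mem : ∀ c s, SelParent sel c s → c ∈ M.nodes
  parent_mark_ne_arrow : ∀ c s, SelParent sel c s → ∀ y, M.mark c y ≠ some .arrow
  eq_or_undir : ∀ x u v, sel x = some (u, v) → u = v ∨ M.undir u v
  exists_of_undir : ∀ u v, M.undir u v → ∃ x, sel x = some (u, v)

namespace SelLabelling

variable {c s : N}

theorem sel_eq_none (hL : SelLabelling M sel) (hx : x ∈ M.nodes) : sel x = none :=
  Option.eq_none_iff_forall_ne_some.mpr fun p hp => hL.fresh x p hp hx

theorem not_selParent_of_sel_eq_some (hL : SelLabelling M sel) {p : N × N}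
    (hc : sel c = some p) : ¬ SelParent sel c s :=
  fun h => hL.fresh c p hc (hL.parent_mem c s h)

theorem not_selParent_of_mem (hL : SelLabelling M sel) (hs : s ∈ M.nodes) :
    ¬ SelParent sel c s :=
  fun h => absurd h.sel_isSome (by simp [hL.sel_eq_none hs])

theorem not_selParent_self (hL : SelLabelling M sel) : ¬ SelParent sel x x :=
  fun h => hL.not_selParent_of_mem (hL.parent_mem x x h) h

theorem selGraph_dir_of_selParent (hL : SelLabelling M sel) (h : SelParent sel c s) :
    (selGraph M sel).dir c s := by
  obtain ⟨u, v, hs, hc⟩ := h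
  have hc' := hL.sel_eq_none (hL.parent_mem c s ⟨u, v, hs, hc⟩)
  unfold dir
  rw [selGraph_mark_of_sel_eq_none_of_sel_eq_some hc' hs, selGraph_mark_of_sel_eq_some hs]
  simp [hc]

theorem selGraph_adj_iff (hL : SelLabelling M sel) :
    (selGraph M sel).adj x y ↔
      (sel x = none ∧ sel y = none ∧ M.adj x y ∧ ¬ M.undir x y) ∨
        SelParent sel x y ∨ SelParent sel y x := by
  rcases hx : sel x with _ | ⟨u, v⟩
  · rcases hy : sel y with _ | ⟨u, v⟩
    · simp [selGraph_adj_iff_of_sel_eq_none hx hy, SelParent, hx, hy]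
    · simp [adj, selGraph_mark_of_sel_eq_none_of_sel_eq_some hx hy, SelParent, hx, hy]
  · have := hL.not_selParent_of_sel_eq_some (s := y) hx
    simp_all [adj, selGraph_mark_of_sel_eq_some hx, SelParent]

theorem selGraph_mark_to_sel_ne_arrow (hL : SelLabelling M sel) (hs : sel s = some (u, v))
    (z : N) : (selGraph M sel).mark z s ≠ some .arrow := by
  rcases hz : sel z with _ | ⟨u', v'⟩
  · rw [selGraph_mark_of_sel_eq_none_of_sel_eq_some hz hs]
    split_ifs <;> simp
  · rw [selGraph_mark_of_sel_eq_some hz]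
    have hs' : ¬ (s = u' ∨ s = v') :=
      fun h => hL.fresh s _ hs (hL.parent_mem s z ⟨u', v', hz, h⟩)
    simp [hs']

theorem eq_or_selParent_of_selGraph_anc (hL : SelLabelling M sel) (hs : sel s = some (u, v))
    (h : (selGraph M sel).anc x s) : x = s ∨ SelParent sel x s := by
  rcases Relation.ReflTransGen.cases_tail h with rfl | ⟨c, hxc, hcs⟩
  · exact Or.inl rfl
  have hc := sel_eq_none_of_selGraph_dir hcs
  have hcs' : SelParent sel c s := by
    have := hcs.1
    rw [selGraph_mark_of_sel_eq_none_of_sel_eq_some hc hs] at this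
    by_contra hne
    simp_all [SelParent]
  have hxc := anc_eq_of_forall_mark_ne_arrow (hL.parent_mark_ne_arrow c s hcs')
    (anc_of_selGraph_anc hxc hc)
  exact Or.inr (hxc ▸ hcs')

theorem mark_ne_arrow_of_mem_selGraph_ancSet (hL : SelLabelling M sel) (hx : sel x = none)
    (h : x ∈ (selGraph M sel).ancSet {s | (sel s).isSome}) (y : N) :
    M.mark x y ≠ some .arrow := by
  obtain ⟨s, hs, hxs⟩ := h
  obtain ⟨⟨u, v⟩, hs⟩ := Option.isSome_iff_exists.mp hs
  rcases hL.eq_or_selParent_of_selGraph_anc hs hxs with rfl | hxs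
  · rw [hx] at hs; cases hs
  · exact hL.parent_mark_ne_arrow x s hxs y

theorem selGraph_wf (hL : SelLabelling M sel) (hWF : M.WF) : (selGraph M sel).WF := by
  obtain ⟨hdisj, hIfin, hOfin, hsym, hirr, hmem⟩ := hWF
  refine ⟨Set.disjoint_union_right.mpr ⟨hdisj, Set.disjoint_left.mpr fun x hx hs => ?_⟩,
    hIfin, hOfin.union hL.finite, fun x y h => ?_, fun x => ?_, fun x y h => ?_⟩
  · obtain ⟨p, hp⟩ := Option.isSome_iff_exists.mp hs
    exact hL.fresh x p hp (Or.inl hx)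
  · change (selGraph M sel).adj y x
    rcases hL.selGraph_adj_iff.mp h with ⟨hx, hy, hxy, hu⟩ | h | h
    · exact hL.selGraph_adj_iff.mpr (Or.inl ⟨hy, hx, hsym x y hxy, mt undir_comm.mp hu⟩)
    · exact hL.selGraph_adj_iff.mpr (Or.inr (Or.inr h))
    · exact hL.selGraph_adj_iff.mpr (Or.inr (Or.inl h))
  · refine Option.not_isSome_iff_eq_none.mp fun h => ?_
    rcases hL.selGraph_adj_iff.mp h with ⟨-, -, hxx, -⟩ | h | h
    · simp [adj, hirr x] at hxx
    all_goals exact hL.not_selParent_self h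
  · rcases hL.selGraph_adj_iff.mp h with ⟨-, -, hxy, -⟩ | h | h
    · exact ⟨selGraph_nodes_subset (hmem x y hxy).1, selGraph_nodes_subset (hmem x y hxy).2⟩
    · exact ⟨selGraph_nodes_subset (hL.parent_mem x y h), Or.inr (Or.inr h.sel_isSome)⟩
    · exact ⟨Or.inr (Or.inr h.sel_isSome), selGraph_nodes_subset (hL.parent_mem y x h)⟩

theorem selGraph_isIADMG (hL : SelLabelling M sel) (hM : M.IsIMAG) :
    (selGraph M sel).IsIADMG := by
  obtain ⟨⟨hWF, hinArrow, hinAdj, hacyc, -⟩, -⟩ := id hM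
  refine ⟨hL.selGraph_wf hWF, fun x y h => ?_, fun x y hxy hyx => ?_, fun x hx y h => ?_,
    fun x hx y hy h => ?_⟩
  · rcases hL.selGraph_adj_iff.mp h with ⟨hx, hy, hxy, hu⟩ | h | h
    · rcases hM.mark_eq_tail_or_arrow hxy with h1 | h1 <;>
        rcases hM.mark_eq_tail_or_arrow (hWF.2.2.2.1 x y hxy) with h2 | h2
      · exact absurd ⟨h1, h2⟩ hu
      · exact Or.inl ((selGraph_dir_iff hx hy).mpr ⟨h1, h2⟩)
      · exact Or.inr (Or.inl ((selGraph_dir_iff hy hx).mpr ⟨h2, h1⟩))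
      · exact Or.inr (Or.inr ((selGraph_bidir_iff hx hy).mpr ⟨h1, h2⟩))
    · exact Or.inl (hL.selGraph_dir_of_selParent h)
    · exact Or.inr (Or.inl (hL.selGraph_dir_of_selParent h))
  · have hx := sel_eq_none_of_selGraph_dir hxy
    rcases hy : sel y with _ | p
    · exact hacyc x y ((selGraph_dir_iff hx hy).mp hxy) (anc_of_selGraph_anc hyx hx)
    · rw [eq_of_selGraph_anc_of_sel_eq_some hy hyx, hx] at hy
      cases hy
  · have hx' := hL.sel_eq_none (Or.inl hx)
    rcases hy : sel y with _ | ⟨u, v⟩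
    · exact hinArrow x hx y ((selGraph_mark_eq_arrow_iff hx' hy).mp h)
    · exact hL.selGraph_mark_to_sel_ne_arrow hy x h
  · rcases hL.selGraph_adj_iff.mp h with ⟨-, -, hxy, -⟩ | h | h
    · exact hinAdj x hx y hy hxy
    · exact hL.not_selParent_of_mem (Or.inl hy) h
    · exact hL.not_selParent_of_mem (Or.inl hx) h

theorem selGraph_inducingPathBtw_of_adj (hL : SelLabelling M sel) (hWF : M.WF) (hxy : x ≠ y)
    (h : M.adj x y) : (selGraph M sel).InducingPathBtw ∅ {s | (sel s).isSome} x y := by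
  obtain ⟨-, -, -, -, -, hmem⟩ := hWF
  have hx := hL.sel_eq_none (hmem x y h).1
  have hy := hL.sel_eq_none (hmem x y h).2
  by_cases hu : M.undir x y
  · obtain ⟨s, hs⟩ := hL.exists_of_undir x y hu
    have hxs := hL.selGraph_dir_of_selParent ⟨x, y, hs, Or.inl rfl⟩
    have hys := hL.selGraph_dir_of_selParent ⟨x, y, hs, Or.inr rfl⟩
    have hne : ∀ {z}, sel z = none → z ≠ s := fun hz h => by simp [h, hs] at hz
    exact inducingPathBtw_of_collider hxs.adj hxs.2 hys.2 ⟨s, Or.inr (by simp [hs]), .refl⟩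
      (hne hx) (hne hy).symm hxy
  · exact inducingPathBtw_of_adj ((selGraph_adj_iff_of_sel_eq_none hx hy).mpr ⟨h, hu⟩) hxy

theorem eq_one_and_len_eq_two_of_sel (hL : SelLabelling M sel) {S : Set N}
    {w : GWalk (selGraph M sel)} (hw : (selGraph M sel).InducingWalk ∅ S w) {i : ℕ}
    (h0 : 0 < i) (hi : i < w.len) (hs : sel (w.f i) = some (u, v)) : i = 1 ∧ w.len = 2 := by
  have h1 : ¬ 1 < i := fun h1 => hL.selGraph_mark_to_sel_ne_arrow hs _ <| by
    simpa [Nat.sub_add_cancel h0] using (hw.colliderAt (i := i - 1) (by omega) (by omega)).2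
  have h2 : ¬ i + 1 < w.len := fun h2 => hL.selGraph_mark_to_sel_ne_arrow hs _ <| by
    simpa using (hw.colliderAt (i := i + 1) (by omega) h2).1
  omega

theorem selParent_of_selGraph_adj (hL : SelLabelling M sel) (hc : c ∈ M.nodes)
    (hs : (sel s).isSome) (h : (selGraph M sel).adj c s) : SelParent sel c s := by
  rcases hL.selGraph_adj_iff.mp h with ⟨-, hs', -⟩ | h | h
  · simp [hs'] at hs
  · exact h
  · exact absurd h (hL.not_selParent_of_mem hc)

theorem adj_of_selParent_of_selParent (hL : SelLabelling M sel) (hx : SelParent sel x s)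
    (hy : SelParent sel y s) (hxy : x ≠ y) : M.adj x y := by
  obtain ⟨u, v, hs, hx⟩ := hx
  obtain ⟨u', v', hs', hy⟩ := hy
  obtain ⟨rfl, rfl⟩ : u = u' ∧ v = v' := by simpa [hs] using hs'
  rcases hL.eq_or_undir s u v hs with rfl | huv
  · simp_all
  · rcases hx with rfl | rfl <;> rcases hy with rfl | rfl
    · exact absurd rfl hxy
    · exact Option.isSome_of_mem huv.1
    · exact Option.isSome_of_mem huv.2
    · exact absurd rfl hxy

theorem adj_of_selGraph_inducingPathBtw (hL : SelLabelling M sel) (hM : M.IsIMAG) (hxy : x ≠ y)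
    (hx : x ∈ M.nodes) (hy : y ∈ M.nodes)
    (h : (selGraph M sel).InducingPathBtw ∅ {s | (sel s).isSome} x y) : M.adj x y := by
  obtain ⟨⟨hWF, -, -, -, -, -, hmax⟩, -⟩ := id hM
  obtain ⟨w, hpath, rfl, rfl, hw⟩ := h
  by_cases hsel : ∃ i, 0 < i ∧ i < w.len ∧ (sel (w.f i)).isSome
  · obtain ⟨i, h0, hi, hs⟩ := hsel
    obtain ⟨⟨u, v⟩, hs'⟩ := Option.isSome_iff_exists.mp hs
    obtain ⟨rfl, hlen⟩ := hL.eq_one_and_len_eq_two_of_sel hw h0 hi hs'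
    have hsym := (hL.selGraph_wf hWF).2.2.2.1
    refine hL.adj_of_selParent_of_selParent (s := w.f 1)
      (hL.selParent_of_selGraph_adj hx hs (w.hadj 0 (by omega)))
      (hL.selParent_of_selGraph_adj hy hs ?_) hxy
    change (selGraph M sel).adj (w.f w.len) (w.f 1)
    rw [hlen]
    exact hsym _ _ (w.hadj 1 (by omega))
  have hns : ∀ j ≤ w.len, sel (w.f j) = none := fun j hj => by
    rcases Nat.eq_zero_or_pos j with rfl | h0
    · exact hL.sel_eq_none hx
    rcases hj.lt_or_eq with hj | rfl
    · exact Option.not_isSome_iff_eq_none.mp fun hs => hsel ⟨j, h0, hj, hs⟩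
    · exact hL.sel_eq_none hy
  by_contra hnadj
  refine hmax _ _ hxy hx hy hnadj ⟨⟨w.len, w.f, fun j hj =>
    ((selGraph_adj_iff_of_sel_eq_none (hns j hj.le) (hns (j + 1) hj)).mp (w.hadj j hj)).1⟩,
    hpath, rfl, rfl, fun j h0 (hj : j < w.len) => Or.inr ?_,
    fun j h0 (hj : j < w.len) hcol => ?_⟩
  · have hcol := hw.colliderAt h0 hj
    exact ⟨(selGraph_mark_eq_arrow_iff (hns j hj.le) (hns (j - 1) (by omega))).mp hcol.1,
      (selGraph_mark_eq_arrow_iff (hns j hj.le) (hns (j + 1) hj)).mp hcol.2⟩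
  obtain ⟨t, ht | ht, hanc⟩ := hw.2 j h0 hj (hw.colliderAt h0 hj)
  · refine ⟨t, Or.inl ht, anc_of_selGraph_anc hanc ?_⟩
    rcases ht with rfl | rfl
    exacts [hns 0 (Nat.zero_le _), hns w.len le_rfl]
  · exact absurd hcol.1 (hL.mark_ne_arrow_of_mem_selGraph_ancSet (hns j hj.le) ⟨t, ht, hanc⟩ _)

theorem selADMG_wf (hL : SelLabelling M sel) (hM : M.IsIMAG) : (selADMG M sel).WF :=
  ⟨hL.selGraph_isIADMG hM, Set.subset_union_right⟩

theorem represents_selADMG (hL : SelLabelling M sel) (hM : M.IsIMAG) :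
    RepresentsS M (selADMG M sel) := by
  obtain ⟨⟨hWF, -, hinAdj, hacyc, halmost, -⟩, -⟩ := id hM
  obtain ⟨-, -, -, hsym, -, hmem⟩ := id hWF
  refine ⟨rfl, ?_, fun x y hxy hx hy => ⟨fun h => ⟨fun hi => hinAdj x hi.1 y hi.2 h,
      hL.selGraph_inducingPathBtw_of_adj hWF hxy h⟩,
      fun h => hL.adj_of_selGraph_inducingPathBtw hM hxy hx hy h.2⟩,
    fun x y h => ?_, fun x y h => ?_⟩
  · refine (Set.union_sdiff_cancel_right fun z ⟨hz, hs⟩ => ?_).symm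
    obtain ⟨p, hp⟩ := Option.isSome_iff_exists.mp hs
    exact hL.fresh z p hp (Or.inr hz)
  · have hx := hL.sel_eq_none (hmem x y (Option.isSome_of_mem h)).1
    have hy := hL.sel_eq_none (hmem x y (Option.isSome_of_mem h)).2
    rintro ⟨t, rfl | ht, hanc⟩
    · have hanc := anc_of_selGraph_anc hanc hy
      rcases hM.mark_eq_tail_or_arrow (hsym x t (Option.isSome_of_mem h)) with h' | h'
      · exact hacyc t x ⟨h', h⟩ hanc
      · exact halmost x t hanc ⟨h', h⟩
    · exact hL.mark_ne_arrow_of_mem_selGraph_ancSet hx ⟨t, ht, hanc⟩ y h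
  · have hx := hL.sel_eq_none (hmem x y (Option.isSome_of_mem h)).1
    have hy := hL.sel_eq_none (hmem x y (Option.isSome_of_mem h)).2
    rcases hM.mark_eq_tail_or_arrow (hsym x y (Option.isSome_of_mem h)) with h' | h'
    · obtain ⟨s, hs⟩ := hL.exists_of_undir x y ⟨h, h'⟩
      exact ⟨s, Or.inr (show (sel s).isSome by simp [hs]),
        .single (hL.selGraph_dir_of_selParent ⟨x, y, hs, Or.inl rfl⟩)⟩
    · exact ⟨y, Or.inl rfl, .single ((selGraph_dir_iff hx hy).mpr ⟨h, h'⟩)⟩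

theorem mem_selADMG_ancSet (hL : SelLabelling M sel) {a s : N} (hs : sel s = some (a, a)) :
    a ∈ (selADMG M sel).graph.ancSet (selADMG M sel).sel :=
  ⟨s, by simp [selADMG, hs], .single (hL.selGraph_dir_of_selParent ⟨a, a, hs, Or.inl rfl⟩)⟩

end SelLabelling

theorem exists_selLabelling [Infinite N] (hM : M.IsIMAG) {a : N} (ha : a ∈ M.nodes)
    (hna : ¬ M.arrowAt a) : ∃ sel, SelLabelling M sel ∧ ∃ s, sel s = some (a, a) := by
  obtain ⟨-, hIfin, hOfin, -, -, hmem⟩ := hM.1.1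
  have hfin : M.nodes.Finite := hIfin.union hOfin
  let D : Set (N × N) := {p | M.undir p.1 p.2} ∪ {(a, a)}
  have hD : ∀ p ∈ D, p.1 = p.2 ∨ M.undir p.1 p.2 := by
    rintro p (hp | rfl)
    exacts [Or.inr hp, Or.inl rfl]
  have hDend : ∀ p ∈ D, ∀ c, (c = p.1 ∨ c = p.2) →
      c ∈ M.nodes ∧ ∀ y, M.mark c y ≠ some .arrow := by
    rintro ⟨u, v⟩ (huv | huv) c (rfl | rfl)
    · exact ⟨(hmem _ _ (Option.isSome_of_mem huv.1)).1, hM.1.mark_ne_arrow_of_undir huv⟩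
    · exact ⟨(hmem _ _ (Option.isSome_of_mem huv.1)).2,
        hM.1.mark_ne_arrow_of_undir (undir_comm.mp huv)⟩
    all_goals
      obtain ⟨rfl, rfl⟩ := Prod.mk.inj huv
      exact ⟨ha, fun y h => hna ⟨y, h⟩⟩
  have hDfin : D.Finite := (hfin.prod hfin).subset fun p hp =>
    ⟨(hDend p hp p.1 (Or.inl rfl)).1, (hDend p hp p.2 (Or.inr rfl)).1⟩
  have := hDfin.to_subtype
  obtain ⟨f, hf⟩ := exists_embedding_forall_notMem (α := D) hfin
  let sel : N → Option (N × N) := fun x => (Function.partialInv f x).map Subtype.val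
  have hsel : ∀ x p, sel x = some p ↔ ∃ hp : p ∈ D, f ⟨p, hp⟩ = x := by
    simp [sel, f.injective.isPartialInv _]
  refine ⟨sel, ⟨(Set.finite_range f).subset fun x hx => ?_, fun x p hx => ?_,
    fun c s ⟨u, v, hs, hc⟩ => ?_, fun c s ⟨u, v, hs, hc⟩ => ?_, fun x u v hx => ?_,
    fun u v huv => ⟨_, (hsel _ (u, v)).mpr ⟨Or.inl huv, rfl⟩⟩⟩,
    _, (hsel _ (a, a)).mpr ⟨Or.inr rfl, rfl⟩⟩
  · obtain ⟨p, hp⟩ := Option.isSome_iff_exists.mp hx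
    obtain ⟨-, rfl⟩ := (hsel x p).mp hp
    exact ⟨_, rfl⟩
  · obtain ⟨-, rfl⟩ := (hsel x p).mp hx
    exact hf _
  · exact (hDend _ ((hsel s _).mp hs).1 c hc).1
  · exact (hDend _ ((hsel s _).mp hs).1 c hc).2
  · exact hD _ ((hsel x _).mp hx).1

end MixedGraph

/-- Let `M` be an iMAG and `a` an output node.  Some edge of `M`
carries an arrowhead at `a` if and only if `a ∉ Anc_A(S_A)` for every isADMG `A`
represented by `M`. -/
theorem statement4 {N : Type} [Infinite N] (M : MixedGraph N) (hM : M.IsIMAG)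
    (a : N) (ha : a ∈ M.outputs) :
    M.arrowAt a ↔
      ∀ A : SADMG N, A.WF → RepresentsS M A → a ∉ A.graph.ancSet A.sel := by
  constructor
  · rintro ⟨b, hb⟩ A - hrep ⟨s, hs, hanc⟩
    exact hrep.2.2.2.1 a b hb ⟨s, Or.inr hs, hanc⟩
  · intro h
    by_contra hna
    obtain ⟨sel, hL, s, hs⟩ := MixedGraph.exists_selLabelling hM (Or.inr ha) hna
    exact h _ (hL.selADMG_wf hM) (hL.represents_selADMG hM) (hL.mem_selADMG_ancSet hs)

end
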